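/- Weak-type (1,…,1) → L^{1/k,∞} bound for multilinear positive dyadic shifts with constant independent of complexity: there is a constant C_W depending only on k and d (one may take C_W = 2^{k(5+d(2k−1))}) such that for every dyadic cube P₀, every Carleson sequence α with ‖α‖ = 1, every m ≥ 0, and all nonnegative f_i ∈ L¹(P₀), one has sup_{λ>0} λ |{x ∈ P₀ : 𝒜^m_{P₀,α}(f₁,…,f_k)(x) > λ}|^k ≤ C_W ∏_{i=1}^k ‖f_i‖_{L¹(P₀)}. -/

import Mathlib

open MeasureTheory ENNReal Set
noncomputable section

/-- A dyadic cube in `ℝ^d`: generation `gen` (side length `2^{-gen}`) and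
position `pos` (lower-left corner `pos * 2^{-gen}`). -/
structure DyadicCube (d : ℕ) where
  gen : ℤ
  pos : Fin d → ℤ

namespace DyadicCube
variable {d : ℕ}

/-- The half-open cube represented by `Q`. -/
def toSet (Q : DyadicCube d) : Set (Fin d → ℝ) :=
  {x | ∀ i, (Q.pos i : ℝ) * (2 : ℝ) ^ (-Q.gen) ≤ x i ∧
        x i < ((Q.pos i : ℝ) + 1) * (2 : ℝ) ^ (-Q.gen)}

/-- Lebesgue measure of the cube. -/
def vol (Q : DyadicCube d) : ℝ≥0∞ := volume Q.toSet

/-- The dyadic parent of a cube. -/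
def parent (Q : DyadicCube d) : DyadicCube d :=
  ⟨Q.gen - 1, fun i => Int.fdiv (Q.pos i) 2⟩

/-- The `m`-th dyadic ancestor of a cube. -/
def ancestor (m : ℕ) (Q : DyadicCube d) : DyadicCube d := parent^[m] Q

/-- `Q.In P`: `Q` is a dyadic subcube of `P`. -/
def In (Q P : DyadicCube d) : Prop := P.gen ≤ Q.gen ∧ Q.toSet ⊆ P.toSet

/-- Average of a nonnegative (extended-real-valued) function over a cube. -/
def avg (Q : DyadicCube d) (f : (Fin d → ℝ) → ℝ≥0∞) : ℝ≥0∞ :=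
  (∫⁻ x in Q.toSet, f x) / Q.vol

/-- Average of a real-valued function over a cube. -/
def avgR (Q : DyadicCube d) (f : (Fin d → ℝ) → ℝ) : ℝ :=
  (∫ x in Q.toSet, f x) / (Q.vol).toReal

/-- `α` is a Carleson sequence on `𝒟(P₀)` with constant `C`. -/
def Carleson (P₀ : DyadicCube d) (α : DyadicCube d → ℝ≥0∞) (C : ℝ≥0∞) : Prop :=
  ∀ P : DyadicCube d, P.In P₀ →
    ∑' Q : {Q : DyadicCube d // Q.In P}, α Q.1 * Q.1.vol ≤ C * P.vol

/-- Real-valued version of the Carleson condition. -/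
def CarlesonR (P₀ : DyadicCube d) (α : DyadicCube d → ℝ) (C : ℝ) : Prop :=
  ∀ P : DyadicCube d, P.In P₀ →
    ∑' Q : {Q : DyadicCube d // Q.In P}, α Q.1 * (Q.1.vol).toReal ≤ C * (P.vol).toReal

/-- `η`-sparse collection of dyadic cubes. -/
def Sparse (η : ℝ≥0∞) (S : Set (DyadicCube d)) : Prop :=
  ∃ E : DyadicCube d → Set (Fin d → ℝ),
    (∀ Q ∈ S, MeasurableSet (E Q) ∧ E Q ⊆ Q.toSet ∧ η * Q.vol ≤ volume (E Q)) ∧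
    S.Pairwise fun Q Q' => Disjoint (E Q) (E Q')

/-- The `k`-linear positive dyadic shift of complexity `m` on `𝒟(P₀)`. -/
def shift (P₀ : DyadicCube d) (α : DyadicCube d → ℝ≥0∞) (m : ℕ) {k : ℕ}
    (f : Fin k → (Fin d → ℝ) → ℝ≥0∞) (x : Fin d → ℝ) : ℝ≥0∞ :=
  ∑' Q : {Q : DyadicCube d // Q.In P₀ ∧ P₀.gen + m ≤ Q.gen},
    α Q.1 * (∏ i, (ancestor m Q.1).avg (f i)) * Q.1.toSet.indicator 1 x

/-- The sliced shift `𝒜^{m;0}_{P,α}`, summing only over generations `jm`, `j ≥ 1`,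
relative to `P`. -/
def slicedShift (P : DyadicCube d) (α : DyadicCube d → ℝ≥0∞) (m : ℕ) {k : ℕ}
    (f : Fin k → (Fin d → ℝ) → ℝ≥0∞) (x : Fin d → ℝ) : ℝ≥0∞ :=
  ∑' Q : {Q : DyadicCube d // Q.In P ∧ ∃ j : ℕ, 1 ≤ j ∧ Q.gen = P.gen + j * m},
    α Q.1 * (∏ i, (ancestor m Q.1).avg (f i)) * Q.1.toSet.indicator 1 x

/-- Real-valued `k`-linear positive dyadic shift of complexity `m`. -/
def shiftR (P₀ : DyadicCube d) (α : DyadicCube d → ℝ) (m : ℕ) {k : ℕ}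
    (f : Fin k → (Fin d → ℝ) → ℝ) (x : Fin d → ℝ) : ℝ :=
  ∑' Q : {Q : DyadicCube d // Q.In P₀ ∧ P₀.gen + m ≤ Q.gen},
    α Q.1 * (∏ i, (ancestor m Q.1).avgR (f i)) * Q.1.toSet.indicator 1 x

/-- Real-valued sliced shift `𝒜^{m;0}_{P,α}`. -/
def slicedShiftR (P : DyadicCube d) (α : DyadicCube d → ℝ) (m : ℕ) {k : ℕ}
    (f : Fin k → (Fin d → ℝ) → ℝ) (x : Fin d → ℝ) : ℝ :=
  ∑' Q : {Q : DyadicCube d // Q.In P ∧ ∃ j : ℕ, 1 ≤ j ∧ Q.gen = P.gen + j * m},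
    α Q.1 * (∏ i, (ancestor m Q.1).avgR (f i)) * Q.1.toSet.indicator 1 x

/-- The positive sparse operator `𝒜⁰_𝒮`. -/
def sparseOp (S : Set (DyadicCube d)) {k : ℕ}
    (f : Fin k → (Fin d → ℝ) → ℝ≥0∞) (x : Fin d → ℝ) : ℝ≥0∞ :=
  ∑' Q : S, (∏ i, (Q : DyadicCube d).avg (f i)) * (Q : DyadicCube d).toSet.indicator 1 x

end DyadicCube

open DyadicCube

/-!
Calderón–Zygmund decomposition at height `λ` for the multilinear averages `∏ᵢ ⟨fᵢ⟩_Q`: the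
maximal cubes `B` with `∏ᵢ ⟨fᵢ⟩_B > λ` are disjoint, and by Hölder's inequality their union `Ω`
has measure at most `(N / λ)^(1/k)`, where `N = ∏ᵢ ‖fᵢ‖₁`. Replacing `fᵢ` on each `B` by its
average gives good parts `gᵢ` all of whose averages are at most `2^(dk) λ`, because the parent
of a stopping cube is not stopping. Off `Ω` the shift of `f` is dominated by the shift of `g`:
an ancestor `Q⁽ᵐ⁾` either lies inside some `B`, and then `Q` misses the point, or is a union of
stopping cubes and points where `g = f`, and then the averages agree.

For `G = {𝒜 g > λ}`, Chebyshev and the Carleson embedding give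
`λ |G| ≤ ∫_G 𝒜 g ≤ ∫_{P₀} M g · M 1_G`, where `M` is the dyadic maximal function. Each maximal
function has a weak-type bound and an `L^∞` bound, hence an `L²` bound by the layer-cake formula,
and Cauchy–Schwarz yields `λ² |G| ≲ N^(1/k) (2^(dk) λ)^(2 - 1/k)`, that is `|G| ≲ (N / λ)^(1/k)`.
No step sees the complexity `m`.
-/

lemma restrict_Ioi_setOf_ofReal_lt (c : ℝ≥0∞) :
    volume.restrict (Ioi 0) {t : ℝ | ENNReal.ofReal t < c} = c := by
  rw [Measure.restrict_apply' measurableSet_Ioi]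
  rcases eq_or_ne c ∞ with rfl | hc
  · simp
  · have : {t : ℝ | ENNReal.ofReal t < c} ∩ Ioi 0 = Ioo 0 c.toReal := by
      ext t
      rw [mem_inter_iff, mem_Ioo, and_comm]
      exact and_congr_right fun ht => ENNReal.ofReal_lt_iff_lt_toReal (le_of_lt ht) hc
    simp [this, hc]

theorem lintegral_eq_lintegral_meas_ofReal_lt {α : Type*} [MeasurableSpace α] (μ : Measure α)
    [SFinite μ] {F : α → ℝ≥0∞} (hF : Measurable F) :
    ∫⁻ x, F x ∂μ = ∫⁻ t in Ioi 0, μ {x | ENNReal.ofReal t < F x} := by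
  set S := {p : α × ℝ | ENNReal.ofReal p.2 < F p.1}
  have hS : MeasurableSet S := measurableSet_lt (by fun_prop) (hF.comp measurable_fst)
  calc ∫⁻ x, F x ∂μ = ∫⁻ x, (∫⁻ t in Ioi (0 : ℝ), S.indicator 1 (x, t)) ∂μ :=
        lintegral_congr fun x => by
          rw [← restrict_Ioi_setOf_ofReal_lt (F x), ← lintegral_indicator_one
            (measurableSet_lt ENNReal.measurable_ofReal measurable_const)]
          rfl
    _ = ∫⁻ t in Ioi (0 : ℝ), ∫⁻ x, S.indicator 1 (x, t) ∂μ :=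
        lintegral_lintegral_swap (f := fun x t => S.indicator 1 (x, t))
          (measurable_one.indicator hS).aemeasurable
    _ = _ := setLIntegral_congr_fun measurableSet_Ioi fun t _ =>
        lintegral_indicator_one (measurableSet_lt measurable_const hF :
          MeasurableSet {x | ENNReal.ofReal t < F x})

lemma setLIntegral_Ioc_ofReal_rpow {T r : ℝ} (hT : 0 ≤ T) (hr : -1 < r) :
    ∫⁻ t in Ioc 0 T, ENNReal.ofReal t ^ r = ENNReal.ofReal (T ^ (r + 1) / (r + 1)) := by
  have hint : IntegrableOn (fun t : ℝ => t ^ r) (Ioc 0 T) := by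
    simpa [intervalIntegrable_iff, uIoc_of_le hT] using
      intervalIntegral.intervalIntegrable_rpow' (a := 0) (b := T) hr
  rw [setLIntegral_congr_fun measurableSet_Ioc fun t ht => ENNReal.ofReal_rpow_of_pos ht.1,
    ← ofReal_integral_eq_lintegral_ofReal hint
      (ae_restrict_of_forall_mem measurableSet_Ioc fun t ht => Real.rpow_nonneg ht.1.le r),
    ← intervalIntegral.integral_of_le hT, integral_rpow (.inl hr),
    Real.zero_rpow (by linarith), sub_zero]

lemma lintegral_mul_sq_le {α : Type*} [MeasurableSpace α] (μ : Measure α) {f g : α → ℝ≥0∞}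
    (hf : AEMeasurable f μ) (hg : AEMeasurable g μ) :
    (∫⁻ x, f x * g x ∂μ) ^ 2 ≤ (∫⁻ x, f x ^ 2 ∂μ) * ∫⁻ x, g x ^ 2 ∂μ := by
  have h := ENNReal.lintegral_mul_le_Lp_mul_Lq μ .two_two hf hg
  simp only [ENNReal.rpow_two, Pi.mul_apply] at h
  calc (∫⁻ x, f x * g x ∂μ) ^ 2
      ≤ ((∫⁻ x, f x ^ 2 ∂μ) ^ (1 / 2 : ℝ) * (∫⁻ x, g x ^ 2 ∂μ) ^ (1 / 2 : ℝ)) ^ 2 := by gcongr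
    _ = _ := by
      rw [mul_pow, ← ENNReal.rpow_mul_natCast, ← ENNReal.rpow_mul_natCast]
      norm_num

lemma meas_ofReal_lt_sq_le {α : Type*} [MeasurableSpace α] {μ : Measure α} {W : α → ℝ≥0∞}
    {Λ N : ℝ≥0∞} (hΛ : Λ ≠ ∞) (hWΛ : ∀ x, W x ≤ Λ) {p : ℝ} (hp0 : 0 ≤ p)
    (hweak : ∀ t, 0 < t → t ≠ ∞ → μ {x | t < W x} ≤ (N / t) ^ p) {t : ℝ} (ht : 0 < t) :
    μ {x | ENNReal.ofReal t < W x ^ 2} ≤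
      (Ioc 0 (Λ ^ 2).toReal).indicator (fun t => N ^ p * ENNReal.ofReal t ^ (-p / 2)) t := by
  by_cases htΛ : t ≤ (Λ ^ 2).toReal
  · rw [indicator_of_mem (show t ∈ Ioc 0 (Λ ^ 2).toReal from ⟨ht, htΛ⟩)]
    set s := ENNReal.ofReal t ^ (1 / 2 : ℝ)
    have hs : s ^ 2 = ENNReal.ofReal t := by
      rw [← ENNReal.rpow_mul_natCast]; norm_num
    calc μ {x | ENNReal.ofReal t < W x ^ 2} ≤ μ {x | s < W x} := by
          refine measure_mono fun x hx => ?_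
          by_contra h
          exact (hs ▸ hx : s ^ 2 < W x ^ 2).not_ge (by gcongr; exact not_lt.mp h)
      _ ≤ (N / s) ^ p := hweak s (ENNReal.rpow_pos (ofReal_pos.mpr ht) ofReal_ne_top)
          (ENNReal.rpow_ne_top_of_nonneg (by norm_num) ofReal_ne_top)
      _ = N ^ p * ENNReal.ofReal t ^ (-p / 2) := by
        rw [ENNReal.div_rpow_of_nonneg _ _ hp0, div_eq_mul_inv, ← ENNReal.rpow_neg,
          ← ENNReal.rpow_mul]
        ring_nf
  · rw [indicator_of_notMem fun h => htΛ h.2]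
    refine (measure_mono_null (fun x hx => ?_) measure_empty).le
    have : W x ^ 2 ≤ ENNReal.ofReal t :=
      calc W x ^ 2 ≤ Λ ^ 2 := by gcongr; exact hWΛ x
        _ = ENNReal.ofReal (Λ ^ 2).toReal := (ofReal_toReal (pow_ne_top hΛ)).symm
        _ ≤ ENNReal.ofReal t := ofReal_le_ofReal (not_le.mp htΛ).le
    exact this.not_gt hx

theorem lintegral_sq_le_of_meas_lt_le {α : Type*} [MeasurableSpace α] {μ : Measure α} [SFinite μ]
    {W : α → ℝ≥0∞} (hW : Measurable W) {Λ N : ℝ≥0∞} (hΛ : Λ ≠ ∞) (hWΛ : ∀ x, W x ≤ Λ)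
    {p : ℝ} (hp0 : 0 ≤ p) (hp1 : p ≤ 1)
    (hweak : ∀ t, 0 < t → t ≠ ∞ → μ {x | t < W x} ≤ (N / t) ^ p) :
    ∫⁻ x, W x ^ 2 ∂μ ≤ 2 * N ^ p * Λ ^ (2 - p) := by
  set T := (Λ ^ 2).toReal
  have hT : 0 ≤ T := ENNReal.toReal_nonneg
  calc ∫⁻ x, W x ^ 2 ∂μ = ∫⁻ t in Ioi 0, μ {x | ENNReal.ofReal t < W x ^ 2} :=
        lintegral_eq_lintegral_meas_ofReal_lt μ (hW.pow_const 2)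
    _ ≤ ∫⁻ t in Ioi 0, (Ioc 0 T).indicator (fun t => N ^ p * ENNReal.ofReal t ^ (-p / 2)) t :=
        setLIntegral_mono ((Measurable.indicator (by fun_prop) measurableSet_Ioc))
          fun t ht => meas_ofReal_lt_sq_le hΛ hWΛ hp0 hweak ht
    _ = N ^ p * ENNReal.ofReal (T ^ (1 - p / 2) / (1 - p / 2)) := by
        rw [lintegral_indicator measurableSet_Ioc, Measure.restrict_restrict measurableSet_Ioc,
          inter_eq_left.mpr Ioc_subset_Ioi_self, lintegral_const_mul _ (by fun_prop),
          setLIntegral_Ioc_ofReal_rpow hT (by linarith), show -p / 2 + 1 = 1 - p / 2 by ring]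
    _ ≤ N ^ p * ENNReal.ofReal (2 * T ^ (1 - p / 2)) := by
        gcongr
        rw [div_le_iff₀ (by linarith)]
        nlinarith [Real.rpow_nonneg hT (1 - p / 2)]
    _ = 2 * N ^ p * Λ ^ (2 - p) := by
        rw [ENNReal.ofReal_mul zero_le_two, ← ENNReal.ofReal_rpow_of_nonneg hT (by linarith),
          ofReal_toReal (pow_ne_top hΛ), ← ENNReal.rpow_natCast, ← ENNReal.rpow_mul]
        norm_num
        ring_nf

theorem ENNReal.tsum_prod_rpow_le {J ι : Type*} [Countable J] [Fintype ι]
    (a : J → ι → ℝ≥0∞) {p : ι → ℝ} (hp : ∑ i, p i = 1) (hp0 : ∀ i, 0 ≤ p i) :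
    ∑' j, ∏ i, a j i ^ p i ≤ ∏ i, (∑' j, a j i) ^ p i := by
  let _ : MeasurableSpace J := ⊤
  have : MeasurableSingletonClass J := ⟨fun _ => trivial⟩
  simpa [lintegral_count] using ENNReal.lintegral_prod_norm_pow_le (μ := Measure.count)
    Finset.univ (f := fun i j => a j i) (fun _ _ => (measurable_of_countable _).aemeasurable)
    hp fun i _ => hp0 i

lemma ENNReal.mul_pow_le_of_le_mul_rpow {k : ℕ} (hk : k ≠ 0) {a c N lam : ℝ≥0∞}
    (h : a ≤ c * (N / lam) ^ (1 / k : ℝ)) : lam * a ^ k ≤ c ^ k * N :=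
  calc lam * a ^ k ≤ lam * (c * (N / lam) ^ (1 / k : ℝ)) ^ k := by gcongr
    _ = c ^ k * (lam * (N / lam)) := by
        rw [mul_pow, ← ENNReal.rpow_natCast ((N / lam) ^ _), ← ENNReal.rpow_mul,
          one_div_mul_cancel (by exact_mod_cast hk), ENNReal.rpow_one]
        ring
    _ ≤ c ^ k * N := by gcongr; exact ENNReal.mul_div_le

namespace DyadicCube

variable {d k : ℕ}

instance : Countable (DyadicCube d) :=
  Function.Injective.countable (f := fun Q : DyadicCube d => (Q.gen, Q.pos))
    fun Q R h => by cases Q; cases R; simpa using h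

lemma toSet_eq_pi (Q : DyadicCube d) :
    Q.toSet = Set.pi univ fun i =>
      Ico ((Q.pos i : ℝ) * 2 ^ (-Q.gen)) ((Q.pos i + 1) * 2 ^ (-Q.gen)) := by
  ext x; simp [toSet]

lemma measurableSet_toSet (Q : DyadicCube d) : MeasurableSet Q.toSet := by
  rw [toSet_eq_pi]; exact .univ_pi fun _ => measurableSet_Ico

lemma vol_eq (Q : DyadicCube d) : Q.vol = ENNReal.ofReal (2 ^ (-Q.gen)) ^ d := by
  simp [vol, toSet_eq_pi, volume_pi_pi, Real.volume_Ico, add_mul]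

lemma vol_ne_zero (Q : DyadicCube d) : Q.vol ≠ 0 := by
  rw [vol_eq]; exact pow_ne_zero _ (by simpa using zpow_pos (two_pos : (0 : ℝ) < 2) (-Q.gen))

lemma vol_ne_top (Q : DyadicCube d) : Q.vol ≠ ∞ := by
  rw [vol_eq]; exact pow_ne_top ofReal_ne_top

lemma vol_parent (Q : DyadicCube d) : Q.parent.vol = 2 ^ d * Q.vol := by
  have h : (2 : ℝ) ^ (-(Q.gen - 1)) = 2 * 2 ^ (-Q.gen) := by
    rw [neg_sub, sub_eq_add_neg, zpow_add₀ two_ne_zero, zpow_one]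
  rw [vol_eq, vol_eq, parent, h, ENNReal.ofReal_mul zero_le_two, mul_pow, ENNReal.ofReal_ofNat]

def cubeAt (g : ℤ) (x : Fin d → ℝ) : DyadicCube d := ⟨g, fun i => ⌊x i * 2 ^ g⌋⟩

lemma mem_toSet_iff {Q : DyadicCube d} {x : Fin d → ℝ} : x ∈ Q.toSet ↔ cubeAt Q.gen x = Q := by
  obtain ⟨g, p⟩ := Q
  have h2 : (0 : ℝ) < 2 ^ g := zpow_pos two_pos g
  simp only [toSet, cubeAt, mem_ofPred_eq, mk.injEq, true_and, funext_iff, Int.floor_eq_iff,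
    zpow_neg, ← div_eq_mul_inv, div_le_iff₀ h2, lt_div_iff₀ h2]

lemma parent_cubeAt (g : ℤ) (x : Fin d → ℝ) : (cubeAt g x).parent = cubeAt (g - 1) x := by
  simp only [parent, cubeAt, mk.injEq, true_and]
  funext i
  rw [Int.fdiv_eq_ediv_of_nonneg _ zero_le_two, zpow_sub_one₀ two_ne_zero, ← mul_assoc,
    ← div_eq_mul_inv]
  exact_mod_cast (Int.floor_div_natCast (x i * 2 ^ g) 2).symm

lemma ancestor_cubeAt (n : ℕ) (g : ℤ) (x : Fin d → ℝ) :
    ancestor n (cubeAt g x) = cubeAt (g - n) x := by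
  induction n with
  | zero => simp [ancestor]
  | succ n ih =>
    rw [ancestor, Function.iterate_succ_apply', ← ancestor, ih, parent_cubeAt]
    push_cast; ring_nf

lemma ancestor_gen (n : ℕ) (Q : DyadicCube d) : (ancestor n Q).gen = Q.gen - n := by
  induction n with
  | zero => simp [ancestor]
  | succ n ih => rw [ancestor, Function.iterate_succ_apply', ← ancestor]; simp [parent, ih]; ring

lemma nonempty_toSet (Q : DyadicCube d) : Q.toSet.Nonempty :=
  ⟨fun i => Q.pos i * 2 ^ (-Q.gen),
    fun _ => ⟨le_rfl, mul_lt_mul_of_pos_right (lt_add_one _) (zpow_pos two_pos _)⟩⟩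

lemma toSet_subset_ancestor (n : ℕ) (Q : DyadicCube d) : Q.toSet ⊆ (ancestor n Q).toSet := by
  intro x hx
  rw [mem_toSet_iff] at hx ⊢
  rw [ancestor_gen, ← hx, ancestor_cubeAt, hx]

lemma toSet_subset_parent (Q : DyadicCube d) : Q.toSet ⊆ Q.parent.toSet :=
  toSet_subset_ancestor 1 Q

lemma eq_ancestor_of_mem {Q R : DyadicCube d} {x : Fin d → ℝ} (hxQ : x ∈ Q.toSet)
    (hxR : x ∈ R.toSet) (hg : R.gen ≤ Q.gen) : R = ancestor (Q.gen - R.gen).toNat Q := by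
  rw [mem_toSet_iff] at hxQ hxR
  calc R = cubeAt R.gen x := hxR.symm
    _ = cubeAt (Q.gen - (Q.gen - R.gen).toNat) x := by congr 1; omega
    _ = ancestor (Q.gen - R.gen).toNat Q := by rw [← ancestor_cubeAt, hxQ]

lemma In.eq_ancestor {Q R : DyadicCube d} (h : Q.In R) : R = ancestor (Q.gen - R.gen).toNat Q :=
  have ⟨_, hx⟩ := Q.nonempty_toSet
  eq_ancestor_of_mem hx (h.2 hx) h.1

lemma in_of_mem {Q R : DyadicCube d} {x : Fin d → ℝ} (hxQ : x ∈ Q.toSet) (hxR : x ∈ R.toSet)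
    (hg : R.gen ≤ Q.gen) : Q.In R :=
  ⟨hg, eq_ancestor_of_mem hxQ hxR hg ▸ toSet_subset_ancestor _ Q⟩

lemma eq_of_mem_of_gen_eq {Q R : DyadicCube d} {x : Fin d → ℝ} (hxQ : x ∈ Q.toSet)
    (hxR : x ∈ R.toSet) (hg : Q.gen = R.gen) : Q = R := by
  simpa [hg, ancestor] using (eq_ancestor_of_mem hxQ hxR hg.ge).symm

lemma In.trans {Q R S : DyadicCube d} (hQR : Q.In R) (hRS : R.In S) : Q.In S :=
  ⟨hRS.1.trans hQR.1, hQR.2.trans hRS.2⟩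

lemma in_of_in_of_gen_le {Q R P : DyadicCube d} (hQR : Q.In R) (hQP : Q.In P)
    (hg : P.gen ≤ R.gen) : R.In P :=
  have ⟨_, hx⟩ := Q.nonempty_toSet
  in_of_mem (hQR.2 hx) (hQP.2 hx) hg

lemma in_ancestor (n : ℕ) (Q : DyadicCube d) : Q.In (ancestor n Q) :=
  ⟨by rw [ancestor_gen]; omega, toSet_subset_ancestor n Q⟩

def maximalCubes (φ : DyadicCube d → Prop) : Set (DyadicCube d) :=
  {M | φ M ∧ ∀ R, φ R → M.In R → R = M}

lemma exists_mem_maximalCubes {φ : DyadicCube d → Prop} {P₀ : DyadicCube d}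
    (hφ : ∀ Q, φ Q → Q.In P₀) {Q : DyadicCube d} (hQ : φ Q) :
    ∃ M ∈ maximalCubes φ, Q.In M := by
  classical
  set b := (Q.gen - P₀.gen).toNat
  set N := Nat.findGreatest (fun n => φ (ancestor n Q)) b
  have hN : φ (ancestor N Q) := Nat.findGreatest_spec (P := fun n => φ (ancestor n Q))
    (Nat.zero_le b) hQ
  refine ⟨ancestor N Q, ⟨hN, fun R hR hMR => ?_⟩, in_ancestor N Q⟩
  have hQR := (in_ancestor N Q).trans hMR
  have hRQ := hQR.eq_ancestor
  have hjN : (Q.gen - R.gen).toNat ≤ N :=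
    Nat.le_findGreatest (by have := (hφ R hR).1; omega) (hRQ ▸ hR)
  have hNj : N ≤ (Q.gen - R.gen).toNat := by have := hMR.1; rw [ancestor_gen] at this; omega
  rwa [le_antisymm hjN hNj] at hRQ

lemma pairwiseDisjoint_maximalCubes (φ : DyadicCube d → Prop) :
    (maximalCubes φ).PairwiseDisjoint toSet := by
  intro M hM M' hM' hne
  refine Set.disjoint_left.mpr fun x hx hx' => hne ?_
  rcases le_total M.gen M'.gen with h | h
  · exact hM'.2 M hM.1 (in_of_mem hx' hx h)
  · exact (hM.2 M' hM'.1 (in_of_mem hx hx' h)).symm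

lemma avg_le_parent (Q : DyadicCube d) (h : (Fin d → ℝ) → ℝ≥0∞) :
    Q.avg h ≤ 2 ^ d * Q.parent.avg h := by
  rw [avg, avg, vol_parent, ← mul_div_assoc, ENNReal.mul_div_mul_left _ _ (by simp) (by simp)]
  gcongr
  exact toSet_subset_parent Q

lemma prod_avg_eq (Q : DyadicCube d) (h : Fin k → (Fin d → ℝ) → ℝ≥0∞) :
    ∏ i, Q.avg (h i) = (∏ i, ∫⁻ x in Q.toSet, h i x) / Q.vol ^ k := by
  simp [avg, div_eq_mul_inv, Finset.prod_mul_distrib, ENNReal.inv_pow]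

lemma vol_le_of_lt_prod_avg (hk : 0 < k) {Q : DyadicCube d}
    {h : Fin k → (Fin d → ℝ) → ℝ≥0∞} {t : ℝ≥0∞} (ht : t ≠ 0) (ht' : t ≠ ∞)
    (hlt : t < ∏ i, Q.avg (h i)) :
    Q.vol ≤ ((∏ i, ∫⁻ x in Q.toSet, h i x) / t) ^ (1 / k : ℝ) := by
  rw [prod_avg_eq, ENNReal.lt_div_iff_mul_lt (.inl (pow_ne_zero _ Q.vol_ne_zero))
    (.inl (pow_ne_top Q.vol_ne_top))] at hlt
  rw [← ENNReal.rpow_inv_le_iff (by positivity), one_div, inv_inv, ENNReal.rpow_natCast,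
    ENNReal.le_div_iff_mul_le (.inl ht) (.inl ht'), mul_comm]
  exact hlt.le

def cubeMaximal (P₀ : DyadicCube d) (a : DyadicCube d → ℝ≥0∞) (x : Fin d → ℝ) : ℝ≥0∞ :=
  ⨆ R : {R : DyadicCube d // R.In P₀}, R.1.toSet.indicator (fun _ => a R.1) x

section

variable {P₀ : DyadicCube d} {a : DyadicCube d → ℝ≥0∞}

lemma measurable_cubeMaximal (P₀ : DyadicCube d) (a : DyadicCube d → ℝ≥0∞) :
    Measurable (cubeMaximal P₀ a) :=
  .iSup fun _ => measurable_const.indicator (measurableSet_toSet _)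

lemma le_cubeMaximal {R : DyadicCube d} (hR : R.In P₀) {x : Fin d → ℝ} (hx : x ∈ R.toSet) :
    a R ≤ cubeMaximal P₀ a x :=
  le_iSup_of_le (ι := {R : DyadicCube d // R.In P₀}) ⟨R, hR⟩ (by rw [indicator_of_mem hx])

lemma cubeMaximal_le {c : ℝ≥0∞} (h : ∀ R, R.In P₀ → a R ≤ c) (x : Fin d → ℝ) :
    cubeMaximal P₀ a x ≤ c :=
  iSup_le fun R => indicator_le_self' (fun _ _ => zero_le) x |>.trans (h R R.2)

lemma setOf_lt_cubeMaximal_subset (t : ℝ≥0∞) :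
    {x | t < cubeMaximal P₀ a x} ⊆ ⋃ M ∈ maximalCubes (fun R => R.In P₀ ∧ t < a R), M.toSet := by
  intro x hx
  rw [mem_ofPred_eq, cubeMaximal, lt_iSup_iff] at hx
  obtain ⟨R, hR⟩ := hx
  by_cases hxR : x ∈ R.1.toSet
  · rw [indicator_of_mem hxR] at hR
    obtain ⟨M, hM, hRM⟩ := exists_mem_maximalCubes (φ := fun R => R.In P₀ ∧ t < a R)
      (fun _ hQ => hQ.1) ⟨R.2, hR⟩
    exact mem_biUnion hM (hRM.2 hxR)
  · simp [indicator_of_notMem hxR] at hR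

lemma volume_lt_cubeMaximal_le (t : ℝ≥0∞) :
    volume {x | t < cubeMaximal P₀ a x} ≤
      ∑' M : maximalCubes (fun R => R.In P₀ ∧ t < a R), M.1.vol :=
  (measure_mono (setOf_lt_cubeMaximal_subset t)).trans (measure_biUnion_le _ (to_countable _) _)

end

theorem volume_lt_cubeMaximal_prod_avg_le (hk : 0 < k) (P₀ : DyadicCube d)
    (h : Fin k → (Fin d → ℝ) → ℝ≥0∞) {t : ℝ≥0∞} (ht : t ≠ 0) (ht' : t ≠ ∞) :
    volume {x | t < cubeMaximal P₀ (fun R => ∏ i, R.avg (h i)) x} ≤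
      ((∏ i, ∫⁻ x in P₀.toSet, h i x) / t) ^ (1 / k : ℝ) := by
  set S := maximalCubes fun R => R.In P₀ ∧ t < ∏ i, R.avg (h i)
  have hk' : (0 : ℝ) ≤ 1 / k := by positivity
  have hp : ∑ _i : Fin k, (1 / k : ℝ) = 1 := by simp [hk.ne']
  calc volume {x | t < cubeMaximal P₀ (fun R => ∏ i, R.avg (h i)) x}
      ≤ ∑' M : S, M.1.vol := volume_lt_cubeMaximal_le t
    _ ≤ ∑' M : S, (∏ i, (∫⁻ x in M.1.toSet, h i x) ^ (1 / k : ℝ)) * t⁻¹ ^ (1 / k : ℝ) := by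
        gcongr with M
        rw [ENNReal.prod_rpow_of_nonneg hk', ← ENNReal.mul_rpow_of_nonneg _ _ hk', ← div_eq_mul_inv]
        exact vol_le_of_lt_prod_avg hk ht ht' M.2.1.2
    _ ≤ (∏ i, (∑' M : S, ∫⁻ x in M.1.toSet, h i x) ^ (1 / k : ℝ)) * t⁻¹ ^ (1 / k : ℝ) := by
        rw [ENNReal.tsum_mul_right]
        gcongr
        exact ENNReal.tsum_prod_rpow_le _ hp fun _ => hk'
    _ ≤ (∏ i, (∫⁻ x in P₀.toSet, h i x) ^ (1 / k : ℝ)) * t⁻¹ ^ (1 / k : ℝ) := by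
        gcongr with i
        rw [← lintegral_biUnion (to_countable S) (fun M _ => measurableSet_toSet M)
          (pairwiseDisjoint_maximalCubes _)]
        exact lintegral_mono_set (iUnion₂_subset fun M hM => hM.1.1.2)
    _ = _ := by
        rw [ENNReal.prod_rpow_of_nonneg hk', ← ENNReal.mul_rpow_of_nonneg _ _ hk', ← div_eq_mul_inv]

theorem volume_lt_cubeMaximal_density_le (P₀ : DyadicCube d) {G : Set (Fin d → ℝ)}
    (hG : MeasurableSet G) {t : ℝ≥0∞} (ht : t ≠ 0) (ht' : t ≠ ∞) :
    volume {x | t < cubeMaximal P₀ (fun R => volume (R.toSet ∩ G) / R.vol) x} ≤ volume G / t := by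
  set S := maximalCubes fun R => R.In P₀ ∧ t < volume (R.toSet ∩ G) / R.vol
  calc volume {x | t < cubeMaximal P₀ (fun R => volume (R.toSet ∩ G) / R.vol) x}
      ≤ ∑' M : S, M.1.vol := volume_lt_cubeMaximal_le t
    _ ≤ ∑' M : S, volume (M.1.toSet ∩ G) / t := by
        gcongr with M
        have := M.2.1.2
        rw [ENNReal.lt_div_iff_mul_lt (.inl M.1.vol_ne_zero) (.inl M.1.vol_ne_top)] at this
        rw [ENNReal.le_div_iff_mul_le (.inl ht) (.inl ht'), mul_comm]
        exact this.le
    _ = volume (⋃ M ∈ S, M.toSet ∩ G) / t := by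
        simp only [div_eq_mul_inv, ENNReal.tsum_mul_right]
        rw [measure_biUnion (to_countable S)
          ((pairwiseDisjoint_maximalCubes _).mono fun _ => inter_subset_left)
          fun M _ => (measurableSet_toSet M).inter hG]
    _ ≤ volume G / t := by
        gcongr
        exact iUnion₂_subset fun _ _ => inter_subset_right

lemma lintegral_cubeMaximal_prod_avg_sq_le (hk : 0 < k) (P₀ : DyadicCube d)
    {g : Fin k → (Fin d → ℝ) → ℝ≥0∞} {Λ : ℝ≥0∞} (hΛ : Λ ≠ ∞)
    (hgΛ : ∀ R : DyadicCube d, R.In P₀ → ∏ i, R.avg (g i) ≤ Λ) :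
    ∫⁻ x in P₀.toSet, cubeMaximal P₀ (fun R => ∏ i, R.avg (g i)) x ^ 2 ≤
      2 * (∏ i, ∫⁻ x in P₀.toSet, g i x) ^ (1 / k : ℝ) * Λ ^ (2 - 1 / k : ℝ) :=
  lintegral_sq_le_of_meas_lt_le (measurable_cubeMaximal _ _) hΛ (cubeMaximal_le hgΛ)
    (by positivity) (div_le_one_of_le₀ (by exact_mod_cast hk) (by positivity))
    fun _ ht ht' => (Measure.restrict_apply_le _ _).trans
      (volume_lt_cubeMaximal_prod_avg_le hk P₀ g ht.ne' ht')

lemma lintegral_cubeMaximal_density_sq_le (P₀ : DyadicCube d) {G : Set (Fin d → ℝ)}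
    (hG : MeasurableSet G) :
    ∫⁻ x in P₀.toSet, cubeMaximal P₀ (fun R => volume (R.toSet ∩ G) / R.vol) x ^ 2 ≤
      2 * volume G := by
  simpa using lintegral_sq_le_of_meas_lt_le (measurable_cubeMaximal _ _) one_ne_top
    (cubeMaximal_le fun R _ => ENNReal.div_le_of_le_mul (by
      rw [one_mul]; exact measure_mono inter_subset_left))
    zero_le_one le_rfl fun t ht ht' => by
      simpa using (Measure.restrict_apply_le _ _).trans
        (volume_lt_cubeMaximal_density_le P₀ hG ht.ne' ht')

section

variable {P₀ : DyadicCube d} {α : DyadicCube d → ℝ≥0∞} {C : ℝ≥0∞}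
  {𝒬 : Set (DyadicCube d)} {a : DyadicCube d → ℝ≥0∞} {F : (Fin d → ℝ) → ℝ≥0∞}

-- Each maximal cube `M` among `{Q ∈ 𝒬 | s < a Q}` carries Carleson mass at most `C |M|`, and
-- these cubes are disjoint and contained in `{s < F}`.
lemma tsum_indicator_lt_le_mul_measure_lt (hα : Carleson P₀ α C) (h𝒬 : ∀ Q ∈ 𝒬, Q.In P₀)
    (haF : ∀ Q ∈ 𝒬, ∀ x ∈ Q.toSet, a Q ≤ F x) (s : ℝ≥0∞) :
    ∑' Q : 𝒬, {Q | s < a Q}.indicator (fun Q => α Q * Q.vol) Q ≤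
      C * volume.restrict P₀.toSet {x | s < F x} := by
  set S := maximalCubes fun Q => Q ∈ 𝒬 ∧ s < a Q
  have hcover : {Q ∈ 𝒬 | s < a Q} ⊆ ⋃ M : S, {Q : DyadicCube d | Q.In M} := fun Q hQ =>
    have ⟨M, hM, hQM⟩ := exists_mem_maximalCubes (φ := fun Q => Q ∈ 𝒬 ∧ s < a Q)
      (fun _ hQ => h𝒬 _ hQ.1) hQ
    mem_iUnion.mpr ⟨⟨M, hM⟩, hQM⟩
  calc ∑' Q : 𝒬, {Q | s < a Q}.indicator (fun Q => α Q * Q.vol) Q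
      = ∑' Q : {Q ∈ 𝒬 | s < a Q}, α Q * Q.1.vol := by
        rw [tsum_subtype 𝒬 (fun Q => {Q | s < a Q}.indicator (fun Q => α Q * Q.vol) Q),
          tsum_subtype {Q ∈ 𝒬 | s < a Q} (fun Q => α Q * Q.vol), indicator_indicator]
        rfl
    _ ≤ ∑' Q : ⋃ M : S, {Q : DyadicCube d | Q.In M}, α Q * Q.1.vol :=
        ENNReal.tsum_mono_subtype (fun Q => α Q * Q.vol) hcover
    _ ≤ ∑' M : S, ∑' Q : {Q : DyadicCube d | Q.In M}, α Q * Q.1.vol :=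
        ENNReal.tsum_iUnion_le_tsum (fun Q => α Q * Q.vol) _
    _ ≤ ∑' M : S, C * M.1.vol := ENNReal.tsum_le_tsum fun M => hα M (h𝒬 M M.2.1.1)
    _ = C * volume (⋃ M ∈ S, M.toSet) := by
        rw [ENNReal.tsum_mul_left, measure_biUnion (to_countable S)
          (pairwiseDisjoint_maximalCubes _) fun M _ => measurableSet_toSet M]
        rfl
    _ ≤ C * volume.restrict P₀.toSet {x | s < F x} := by
        rw [Measure.restrict_apply' (measurableSet_toSet P₀)]
        gcongr
        exact iUnion₂_subset fun M hM x hx =>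
          ⟨hM.1.2.trans_le (haF M hM.1.1 x hx), (h𝒬 M hM.1.1).2 hx⟩

theorem carleson_embedding (hα : Carleson P₀ α C) (h𝒬 : ∀ Q ∈ 𝒬, Q.In P₀) (hF : Measurable F)
    (haF : ∀ Q ∈ 𝒬, ∀ x ∈ Q.toSet, a Q ≤ F x) :
    ∑' Q : 𝒬, α Q * a Q * Q.1.vol ≤ C * ∫⁻ x in P₀.toSet, F x := by
  have hlevel (Q : DyadicCube d) : MeasurableSet {t : ℝ | ENNReal.ofReal t < a Q} :=
    measurableSet_lt ENNReal.measurable_ofReal measurable_const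
  calc ∑' Q : 𝒬, α Q * a Q * Q.1.vol
      = ∑' Q : 𝒬, ∫⁻ t in Ioi 0,
          {t : ℝ | ENNReal.ofReal t < a Q}.indicator (fun _ => α Q * Q.1.vol) t := by
        congr 1; ext Q
        rw [lintegral_indicator_const (hlevel Q), restrict_Ioi_setOf_ofReal_lt]
        ring
    _ = ∫⁻ t in Ioi 0, ∑' Q : 𝒬,
          {t : ℝ | ENNReal.ofReal t < a Q}.indicator (fun _ => α Q * Q.1.vol) t :=
        (lintegral_tsum fun Q : 𝒬 => (measurable_const.indicator (hlevel Q.1)).aemeasurable).symm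
    _ ≤ ∫⁻ t in Ioi 0, C * volume.restrict P₀.toSet {x | ENNReal.ofReal t < F x} :=
        lintegral_mono fun t => tsum_indicator_lt_le_mul_measure_lt hα h𝒬 haF _
    _ = C * ∫⁻ x in P₀.toSet, F x := by
        rw [lintegral_const_mul
            (f := fun t => volume.restrict P₀.toSet {x | ENNReal.ofReal t < F x}) C
            (Antitone.measurable fun s t hst =>
              measure_mono fun x hx => (ofReal_le_ofReal hst).trans_lt hx),
          lintegral_eq_lintegral_meas_ofReal_lt _ hF]

end

lemma avg_mul_vol (Q : DyadicCube d) (h : (Fin d → ℝ) → ℝ≥0∞) :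
    Q.avg h * Q.vol = ∫⁻ x in Q.toSet, h x :=
  ENNReal.div_mul_cancel Q.vol_ne_zero Q.vol_ne_top

lemma subset_or_disjoint_of_not_subset {B R : DyadicCube d} (h : ¬R.toSet ⊆ B.toSet) :
    B.toSet ⊆ R.toSet ∨ Disjoint B.toSet R.toSet := by
  refine or_iff_not_imp_right.mpr fun hBR => ?_
  obtain ⟨x, hxB, hxR⟩ := not_disjoint_iff.mp hBR
  rcases le_total R.gen B.gen with hg | hg
  · exact (in_of_mem hxB hxR hg).2
  · exact absurd (in_of_mem hxR hxB hg).2 h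

lemma avg_eq_of_forall_eq {R : DyadicCube d} {h : (Fin d → ℝ) → ℝ≥0∞} {c : ℝ≥0∞}
    (hc : ∀ x ∈ R.toSet, h x = c) : R.avg h = c := by
  rw [avg, setLIntegral_congr_fun (measurableSet_toSet R) hc, setLIntegral_const]
  exact ENNReal.mul_div_cancel_right R.vol_ne_zero R.vol_ne_top

def stoppingCubes (P₀ : DyadicCube d) (f : Fin k → (Fin d → ℝ) → ℝ≥0∞) (lam : ℝ≥0∞) :
    Set (DyadicCube d) :=
  maximalCubes fun Q => Q.In P₀ ∧ lam < ∏ i, Q.avg (f i)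

def exceptionalSet (P₀ : DyadicCube d) (f : Fin k → (Fin d → ℝ) → ℝ≥0∞) (lam : ℝ≥0∞) :
    Set (Fin d → ℝ) :=
  ⋃ B ∈ stoppingCubes P₀ f lam, B.toSet

def goodPart (P₀ : DyadicCube d) (f : Fin k → (Fin d → ℝ) → ℝ≥0∞) (lam : ℝ≥0∞) (i : Fin k)
    (x : Fin d → ℝ) : ℝ≥0∞ :=
  (exceptionalSet P₀ f lam)ᶜ.indicator (f i) x +
    ∑' B : stoppingCubes P₀ f lam, B.1.toSet.indicator (fun _ => B.1.avg (f i)) x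

section

variable {P₀ : DyadicCube d} {f : Fin k → (Fin d → ℝ) → ℝ≥0∞} {lam : ℝ≥0∞}

lemma pairwiseDisjoint_stoppingCubes : (stoppingCubes P₀ f lam).PairwiseDisjoint toSet :=
  pairwiseDisjoint_maximalCubes _

lemma measurableSet_exceptionalSet : MeasurableSet (exceptionalSet P₀ f lam) :=
  .biUnion (to_countable _) fun B _ => measurableSet_toSet B

lemma goodPart_eq_avg {B : DyadicCube d} (hB : B ∈ stoppingCubes P₀ f lam) {x : Fin d → ℝ}
    (hx : x ∈ B.toSet) (i : Fin k) : goodPart P₀ f lam i x = B.avg (f i) := by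
  rw [goodPart, indicator_of_notMem (not_not_intro (mem_biUnion hB hx)), zero_add,
    tsum_eq_single ⟨B, hB⟩ fun B' hne => indicator_of_notMem (fun hx' =>
      disjoint_left.mp (pairwiseDisjoint_stoppingCubes B'.2 hB (Subtype.coe_injective.ne hne))
        hx' hx) _, indicator_of_mem hx]

lemma setLIntegral_goodPart {S : Set (Fin d → ℝ)}
    (hS : MeasurableSet S)
    (hBS : ∀ B ∈ stoppingCubes P₀ f lam, B.toSet ⊆ S ∨ Disjoint B.toSet S) (i : Fin k) :
    ∫⁻ x in S, goodPart P₀ f lam i x = ∫⁻ x in S, f i x := by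
  have hΩ := measurableSet_exceptionalSet (P₀ := P₀) (f := f) (lam := lam)
  have hB (B : stoppingCubes P₀ f lam) :
      ∫⁻ x in S, B.1.toSet.indicator (fun _ => B.1.avg (f i)) x = ∫⁻ x in B.1.toSet ∩ S, f i x := by
    rw [lintegral_indicator (measurableSet_toSet _),
      Measure.restrict_restrict (measurableSet_toSet _), setLIntegral_const]
    rcases hBS B B.2 with h | h
    · rw [inter_eq_left.mpr h]; exact avg_mul_vol _ _
    · simp [disjoint_iff_inter_eq_empty.mp h]
  unfold goodPart
  rw [lintegral_add_right _ (.tsum fun _ => measurable_const.indicator (measurableSet_toSet _)),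
    lintegral_indicator hΩ.compl,
    Measure.restrict_restrict hΩ.compl, ← sdiff_eq_compl_inter,
    lintegral_tsum fun _ => (measurable_const.indicator (measurableSet_toSet _)).aemeasurable,
    tsum_congr hB, ← lintegral_biUnion (to_countable _)
      (fun B _ => (measurableSet_toSet B).inter hS)
      (pairwiseDisjoint_stoppingCubes.mono fun _ => inter_subset_left),
    ← iUnion₂_inter, ← exceptionalSet, inter_comm, add_comm]
  exact lintegral_inter_add_sdiff _ _ hΩ

lemma parent_of_mem_stoppingCubes (hP : ∏ i, P₀.avg (f i) ≤ lam) {B : DyadicCube d}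
    (hB : B ∈ stoppingCubes P₀ f lam) : B.parent.In P₀ ∧ ∏ i, B.parent.avg (f i) ≤ lam := by
  have ⟨x, hx⟩ := B.nonempty_toSet
  have hgen : P₀.gen < B.gen := lt_of_le_of_ne hB.1.1.1 fun h =>
    (hB.1.2.trans_le (eq_of_mem_of_gen_eq hx (hB.1.1.2 hx) h.symm ▸ hP)).false
  have hpar : B.parent.In P₀ :=
    in_of_in_of_gen_le (in_ancestor 1 B) hB.1.1 (by simp [parent]; omega)
  refine ⟨hpar, not_lt.mp fun hlt => ?_⟩
  have := congrArg gen (hB.2 B.parent ⟨hpar, hlt⟩ (in_ancestor 1 B))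
  simp [parent] at this

lemma prod_avg_goodPart_le (hP : ∏ i, P₀.avg (f i) ≤ lam)
    {R : DyadicCube d} (hR : R.In P₀) : ∏ i, R.avg (goodPart P₀ f lam i) ≤ 2 ^ (d * k) * lam := by
  by_cases hcase : ∃ B ∈ stoppingCubes P₀ f lam, R.toSet ⊆ B.toSet
  · obtain ⟨B, hB, hRB⟩ := hcase
    calc ∏ i, R.avg (goodPart P₀ f lam i) = ∏ i, B.avg (f i) :=
          Finset.prod_congr rfl fun i _ =>
            avg_eq_of_forall_eq fun x hx => goodPart_eq_avg hB (hRB hx) i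
      _ ≤ ∏ _i : Fin k, 2 ^ d * B.parent.avg (f _i) := by gcongr with i; exact avg_le_parent B (f i)
      _ = 2 ^ (d * k) * ∏ i, B.parent.avg (f i) := by
          rw [Finset.prod_mul_distrib, Finset.prod_const, Finset.card_univ, Fintype.card_fin,
            pow_mul]
      _ ≤ 2 ^ (d * k) * lam := by gcongr; exact (parent_of_mem_stoppingCubes hP hB).2
  · push Not at hcase
    have havg (i : Fin k) : R.avg (goodPart P₀ f lam i) = R.avg (f i) := by
      rw [avg, avg, setLIntegral_goodPart (measurableSet_toSet R)
        (fun B hB => subset_or_disjoint_of_not_subset (hcase B hB))]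
    have hle : ∏ i, R.avg (f i) ≤ lam := not_lt.mp fun hlt =>
      have ⟨M, hM, hRM⟩ := exists_mem_maximalCubes (fun _ hQ => hQ.1) ⟨hR, hlt⟩
      hcase M hM hRM.2
    simp only [havg]
    exact hle.trans (le_mul_of_one_le_left zero_le (one_le_pow₀ one_le_two))

lemma shift_le_shift_goodPart (α : DyadicCube d → ℝ≥0∞) (m : ℕ)
    {x : Fin d → ℝ} (hx : x ∉ exceptionalSet P₀ f lam) :
    shift P₀ α m f x ≤ shift P₀ α m (goodPart P₀ f lam) x := by
  refine ENNReal.tsum_le_tsum fun Q => ?_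
  by_cases hcase : ∃ B ∈ stoppingCubes P₀ f lam, (ancestor m Q.1).toSet ⊆ B.toSet
  · obtain ⟨B, hB, hAB⟩ := hcase
    have hxQ : x ∉ Q.1.toSet := fun hxQ => hx (mem_biUnion hB (hAB (toSet_subset_ancestor m _ hxQ)))
    simp [indicator_of_notMem hxQ]
  · push Not at hcase
    have havg (i : Fin k) :
        (ancestor m Q.1).avg (goodPart P₀ f lam i) = (ancestor m Q.1).avg (f i) := by
      rw [avg, avg, setLIntegral_goodPart (measurableSet_toSet _)
        (fun B hB => subset_or_disjoint_of_not_subset (hcase B hB))]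
    simp only [havg, le_refl]

lemma volume_exceptionalSet_le (hk : 0 < k) (h0 : lam ≠ 0) (htop : lam ≠ ∞) :
    volume (exceptionalSet P₀ f lam) ≤ ((∏ i, ∫⁻ x in P₀.toSet, f i x) / lam) ^ (1 / k : ℝ) :=
  (measure_mono (iUnion₂_subset fun _ hB _ hx =>
    hB.1.2.trans_le (le_cubeMaximal hB.1.1 hx))).trans
    (volume_lt_cubeMaximal_prod_avg_le hk P₀ f h0 htop)

end

lemma measurable_shift (P₀ : DyadicCube d) (α : DyadicCube d → ℝ≥0∞) (m : ℕ)
    (g : Fin k → (Fin d → ℝ) → ℝ≥0∞) : Measurable (shift P₀ α m g) :=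
  .tsum fun _ => (measurable_one.indicator (measurableSet_toSet _)).const_mul _

lemma ancestor_in {P₀ Q : DyadicCube d} {m : ℕ} (hQ : Q.In P₀) (hm : P₀.gen + m ≤ Q.gen) :
    (ancestor m Q).In P₀ :=
  in_of_in_of_gen_le (in_ancestor m Q) hQ (by rw [ancestor_gen]; omega)

theorem setLIntegral_shift_le {P₀ : DyadicCube d} {α : DyadicCube d → ℝ≥0∞} {C : ℝ≥0∞}
    (hα : Carleson P₀ α C) (m : ℕ) (g : Fin k → (Fin d → ℝ) → ℝ≥0∞) {G : Set (Fin d → ℝ)} :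
    ∫⁻ x in G, shift P₀ α m g x ≤ C * ∫⁻ x in P₀.toSet,
      cubeMaximal P₀ (fun R => ∏ i, R.avg (g i)) x *
        cubeMaximal P₀ (fun R => volume (R.toSet ∩ G) / R.vol) x := by
  set 𝒬 := {Q : DyadicCube d | Q.In P₀ ∧ P₀.gen + m ≤ Q.gen}
  calc ∫⁻ x in G, shift P₀ α m g x
      = ∑' Q : 𝒬, α Q * (∏ i, (ancestor m Q.1).avg (g i)) * volume (Q.1.toSet ∩ G) := by
        unfold shift
        rw [lintegral_tsum fun _ => ((measurable_one.indicator
          (measurableSet_toSet _)).const_mul _).aemeasurable]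
        congr 1; ext Q
        rw [lintegral_const_mul _ (measurable_one.indicator (measurableSet_toSet _)),
          lintegral_indicator_one (measurableSet_toSet _),
          Measure.restrict_apply (measurableSet_toSet _)]
    _ = ∑' Q : 𝒬, α Q * ((∏ i, (ancestor m Q.1).avg (g i)) *
          (volume (Q.1.toSet ∩ G) / Q.1.vol)) * Q.1.vol := by
        congr 1; ext Q
        simp only [mul_assoc, ENNReal.div_mul_cancel Q.1.vol_ne_zero Q.1.vol_ne_top]
    _ ≤ _ := carleson_embedding hα (fun _ hQ => hQ.1)
          ((measurable_cubeMaximal _ _).mul (measurable_cubeMaximal _ _))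
          fun Q hQ x hx => mul_le_mul'
            (le_cubeMaximal (ancestor_in hQ.1 hQ.2) (toSet_subset_ancestor m Q hx))
            (le_cubeMaximal hQ.1 hx)

theorem sq_mul_volume_lt_shift_le (hk : 0 < k) {P₀ : DyadicCube d} {α : DyadicCube d → ℝ≥0∞}
    (hα : Carleson P₀ α 1) (m : ℕ) {g : Fin k → (Fin d → ℝ) → ℝ≥0∞} {Λ : ℝ≥0∞} (hΛ : Λ ≠ ∞)
    (hgΛ : ∀ R : DyadicCube d, R.In P₀ → ∏ i, R.avg (g i) ≤ Λ) (lam : ℝ≥0∞) :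
    lam ^ 2 * volume {x ∈ P₀.toSet | lam < shift P₀ α m g x} ≤
      4 * (∏ i, ∫⁻ x in P₀.toSet, g i x) ^ (1 / k : ℝ) * Λ ^ (2 - 1 / k : ℝ) := by
  set N := ∏ i, ∫⁻ x in P₀.toSet, g i x
  set G := {x ∈ P₀.toSet | lam < shift P₀ α m g x}
  set Mg := cubeMaximal P₀ fun R => ∏ i, R.avg (g i)
  set MG := cubeMaximal P₀ fun R => volume (R.toSet ∩ G) / R.vol
  have hG : MeasurableSet G := (measurableSet_toSet P₀).inter
    (measurableSet_lt measurable_const (measurable_shift P₀ α m g))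
  have hGtop : volume G ≠ ∞ := ne_top_of_le_ne_top P₀.vol_ne_top (measure_mono (sep_subset _ _))
  have hcheb : lam * volume G ≤ ∫⁻ x in P₀.toSet, Mg x * MG x := by
    calc lam * volume G ≤ ∫⁻ x in G, shift P₀ α m g x :=
          (setLIntegral_const G lam).symm.trans_le (setLIntegral_mono (measurable_shift P₀ α m g)
            fun x hx => hx.2.le)
      _ ≤ _ := by simpa using setLIntegral_shift_le hα m g (G := G)
  rcases eq_or_ne (volume G) 0 with hG0 | hG0
  · simp [hG0]
  refine (ENNReal.mul_le_mul_iff_left hG0 hGtop).mp ?_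
  calc lam ^ 2 * volume G * volume G = (lam * volume G) ^ 2 := by ring
    _ ≤ (∫⁻ x in P₀.toSet, Mg x * MG x) ^ 2 := by gcongr
    _ ≤ (∫⁻ x in P₀.toSet, Mg x ^ 2) * ∫⁻ x in P₀.toSet, MG x ^ 2 :=
        lintegral_mul_sq_le _ (measurable_cubeMaximal _ _).aemeasurable
          (measurable_cubeMaximal _ _).aemeasurable
    _ ≤ (2 * N ^ (1 / k : ℝ) * Λ ^ (2 - 1 / k : ℝ)) * (2 * volume G) := by
        gcongr
        exacts [lintegral_cubeMaximal_prod_avg_sq_le hk P₀ hΛ hgΛ,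
          lintegral_cubeMaximal_density_sq_le P₀ hG]
    _ = 4 * N ^ (1 / k : ℝ) * Λ ^ (2 - 1 / k : ℝ) * volume G := by ring

lemma two_pow_mul_rpow (hk : 0 < k) :
    ((2 : ℝ≥0∞) ^ (d * k)) ^ (2 - 1 / k : ℝ) = 2 ^ (d * (2 * k - 1)) := by
  rw [← ENNReal.rpow_natCast, ← ENNReal.rpow_mul, ← ENNReal.rpow_natCast]
  congr 1
  have : (k : ℝ) ≠ 0 := by positivity
  rw [Nat.cast_mul, Nat.cast_mul, Nat.cast_sub (by omega)]
  field_simp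
  push_cast
  ring

section

variable {P₀ : DyadicCube d} {α : DyadicCube d → ℝ≥0∞} {f : Fin k → (Fin d → ℝ) → ℝ≥0∞}
  {lam : ℝ≥0∞}

lemma volume_lt_shift_goodPart_le (hk : 0 < k) (hα : Carleson P₀ α 1) (m : ℕ) (h0 : lam ≠ 0)
    (htop : lam ≠ ∞) (hP : ∏ i, P₀.avg (f i) ≤ lam) :
    volume {x ∈ P₀.toSet | lam < shift P₀ α m (goodPart P₀ f lam) x} ≤
      2 ^ (2 + d * (2 * k - 1)) * ((∏ i, ∫⁻ x in P₀.toSet, f i x) / lam) ^ (1 / k : ℝ) := by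
  have hk' : (0 : ℝ) ≤ 1 / k := by positivity
  have hk'' : (0 : ℝ) ≤ 2 - 1 / k := by
    have : (1 : ℝ) / k ≤ 1 := div_le_one_of_le₀ (by exact_mod_cast hk) (by positivity)
    linarith
  have h := sq_mul_volume_lt_shift_le hk hα m (mul_ne_top (pow_ne_top ofNat_ne_top) htop)
    (fun R hR => prod_avg_goodPart_le hP hR) lam
  refine (ENNReal.mul_le_mul_iff_right (pow_ne_zero 2 h0) (pow_ne_top htop)).mp (h.trans_eq ?_)
  rw [Finset.prod_congr rfl fun i _ =>
      setLIntegral_goodPart (measurableSet_toSet P₀) (fun B hB => .inl hB.1.1.2) i,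
    ENNReal.mul_rpow_of_nonneg _ _ hk'', two_pow_mul_rpow hk, ENNReal.rpow_sub _ _ h0 htop,
    ENNReal.div_rpow_of_nonneg _ _ hk', ENNReal.rpow_two, pow_add]
  simp only [div_eq_mul_inv]
  ring

theorem volume_lt_shift_le_of_prod_avg_le (hk : 0 < k) (hα : Carleson P₀ α 1) (m : ℕ)
    (h0 : lam ≠ 0) (htop : lam ≠ ∞) (hP : ∏ i, P₀.avg (f i) ≤ lam) :
    volume {x ∈ P₀.toSet | lam < shift P₀ α m f x} ≤
      2 ^ (3 + d * (2 * k - 1)) * ((∏ i, ∫⁻ x in P₀.toSet, f i x) / lam) ^ (1 / k : ℝ) := by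
  set s := ((∏ i, ∫⁻ x in P₀.toSet, f i x) / lam) ^ (1 / k : ℝ)
  set e := d * (2 * k - 1)
  have hcover : {x ∈ P₀.toSet | lam < shift P₀ α m f x} ⊆ exceptionalSet P₀ f lam ∪
      {x ∈ P₀.toSet | lam < shift P₀ α m (goodPart P₀ f lam) x} :=
    fun x hx => or_iff_not_imp_left.mpr fun hxΩ =>
      ⟨hx.1, hx.2.trans_le (shift_le_shift_goodPart α m hxΩ)⟩
  calc volume {x ∈ P₀.toSet | lam < shift P₀ α m f x}
      ≤ volume (exceptionalSet P₀ f lam) +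
          volume {x ∈ P₀.toSet | lam < shift P₀ α m (goodPart P₀ f lam) x} :=
        (measure_mono hcover).trans (measure_union_le _ _)
    _ ≤ s + 2 ^ (2 + e) * s := add_le_add (volume_exceptionalSet_le hk h0 htop)
          (volume_lt_shift_goodPart_le hk hα m h0 htop hP)
    _ ≤ 2 ^ (2 + e) * s + 2 ^ (2 + e) * s := by
        gcongr
        exact le_mul_of_one_le_left zero_le (one_le_pow₀ one_le_two)
    _ = 2 ^ (3 + e) * s := by ring

end

lemma mul_volume_pow_le_of_le_prod_avg {P₀ : DyadicCube d} {f : Fin k → (Fin d → ℝ) → ℝ≥0∞}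
    {E : Set (Fin d → ℝ)} (hE : E ⊆ P₀.toSet) {lam : ℝ≥0∞} (hlam : lam ≤ ∏ i, P₀.avg (f i)) :
    lam * volume E ^ k ≤ ∏ i, ∫⁻ x in P₀.toSet, f i x :=
  calc lam * volume E ^ k ≤ (∏ i, P₀.avg (f i)) * P₀.vol ^ k := by gcongr; exact measure_mono hE
    _ = ∏ i, ∫⁻ x in P₀.toSet, f i x := by
        rw [prod_avg_eq, ENNReal.div_mul_cancel (pow_ne_zero _ P₀.vol_ne_zero)
          (pow_ne_top P₀.vol_ne_top)]

end DyadicCube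

theorem shift_weak_type_general {d k : ℕ} (hk : 0 < k) (P₀ : DyadicCube d)
    (α : DyadicCube d → ℝ≥0∞) (hα : Carleson P₀ α 1) (m : ℕ)
    (f : Fin k → (Fin d → ℝ) → ℝ≥0∞) :
    ∀ lam : ℝ≥0∞, 0 < lam →
      lam * (volume {x ∈ P₀.toSet | lam < shift P₀ α m f x}) ^ k ≤
        2 ^ (k * (5 + d * (2 * k - 1))) * ∏ i, ∫⁻ x in P₀.toSet, f i x := by
  intro lam hlam
  rcases eq_or_ne lam ∞ with rfl | htop
  · simp [zero_pow hk.ne']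
  rcases le_or_gt lam (∏ i, P₀.avg (f i)) with hle | hlt
  · exact (mul_volume_pow_le_of_le_prod_avg (sep_subset _ _) hle).trans
      (le_mul_of_one_le_left zero_le (one_le_pow₀ one_le_two))
  calc lam * volume {x ∈ P₀.toSet | lam < shift P₀ α m f x} ^ k
      ≤ (2 ^ (3 + d * (2 * k - 1))) ^ k * ∏ i, ∫⁻ x in P₀.toSet, f i x :=
        ENNReal.mul_pow_le_of_le_mul_rpow hk.ne'
          (volume_lt_shift_le_of_prod_avg_le hk hα m hlam.ne' htop hlt.le)
    _ ≤ 2 ^ (k * (5 + d * (2 * k - 1))) * ∏ i, ∫⁻ x in P₀.toSet, f i x := by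
        rw [← pow_mul, mul_comm (3 + _)]
        gcongr
        · exact one_le_two
        · omega

/-- weak-type `L¹ × ⋯ × L¹ → L^{1/k,∞}` bound for the `k`-linear positive
dyadic shift of complexity `m`, with constant `C_W = 2^{k(5+d(2k−1))}` independent of `m`. -/
theorem shift_weak_type {d k : ℕ} (hk : 0 < k) (P₀ : DyadicCube d)
    (α : DyadicCube d → ℝ≥0∞) (hα : Carleson P₀ α 1) (m : ℕ)
    (f : Fin k → (Fin d → ℝ) → ℝ≥0∞) (hf : ∀ i, Measurable (f i)) :
    ∀ lam : ℝ≥0∞, 0 < lam →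
      lam * (volume {x ∈ P₀.toSet | lam < shift P₀ α m f x}) ^ k ≤
        2 ^ (k * (5 + d * (2 * k - 1))) * ∏ i, ∫⁻ x in P₀.toSet, f i x :=
  shift_weak_type_general hk P₀ α hα m f
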